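/- arXiv:1307.4746 — 2 statements merged into one kernel-verified Lean document; each statement's English description precedes it below -/
import Mathlib

section
/- Substituting s = a² and a'(r) = √(w(a²)) reduces the rotationally symmetric shrinking soliton system to the single second-order ODE 4s²ww'' − [2sw' + s − 2(n−2)] s w' + 2(n−2)(1−w)w = 0 for w = w(s). -/
open Filter Topology

section
variable {w f : ℝ → ℝ} {s c : ℝ}

theorem deriv_soliton_constraint (hw : DifferentiableAt ℝ w s) (hw' : DifferentiableAt ℝ (deriv w) s)
    (hf' : DifferentiableAt ℝ (deriv f) s)
    (hc : (fun t => 4 * t * w t * deriv f t)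
      =ᶠ[𝓝 s] fun t => t - 2 * (c - t * deriv w t - c * w t)) :
    (4 * w s + 4 * s * deriv w s) * deriv f s + 4 * s * w s * deriv (deriv f) s
      = 1 + 2 * (deriv w s + s * deriv (deriv w) s) + 2 * c * deriv w s := by
  have hL : HasDerivAt (fun t => 4 * t * w t * deriv f t)
      ((4 * w s + 4 * s * deriv w s) * deriv f s + 4 * s * w s * deriv (deriv f) s) s :=
    ((((hasDerivAt_id' s).const_mul 4).mul hw.hasDerivAt).mul hf'.hasDerivAt).congr_deriv
      (by simp only [Pi.mul_apply]; ring)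
  have hR : HasDerivAt (fun t => t - 2 * (c - t * deriv w t - c * w t))
      (1 + 2 * (deriv w s + s * deriv (deriv w) s) + 2 * c * deriv w s) s :=
    ((hasDerivAt_id' s).sub ((((hasDerivAt_const s c).sub
      ((hasDerivAt_id' s).mul hw'.hasDerivAt)).sub
        (hw.hasDerivAt.const_mul c)).const_mul 2)).congr_deriv (by ring)
  rw [← hL.deriv, ← hR.deriv]
  exact hc.deriv_eq

end

theorem stmt12_general (n : ℕ) (S : ℝ) (w f : ℝ → ℝ)
    (hdw : ∀ s ∈ Set.Ioi S, DifferentiableAt ℝ w s ∧ DifferentiableAt ℝ (deriv w) s)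
    (hdf : ∀ s ∈ Set.Ioi S, DifferentiableAt ℝ f s ∧ DifferentiableAt ℝ (deriv f) s)
    (h1 : ∀ s ∈ Set.Ioi S,
      1 + 2 * ((n : ℝ) - 1) * deriv w s
        = 8 * s * w s * deriv (deriv f) s + 4 * w s * deriv f s
          + 4 * s * deriv w s * deriv f s)
    (h2 : ∀ s ∈ Set.Ioi S,
      4 * s * w s * deriv f s
        = s - 2 * (((n : ℝ) - 2) - s * deriv w s - ((n : ℝ) - 2) * w s)) :
    ∀ s ∈ Set.Ioi S,
      4 * s ^ 2 * w s * deriv (deriv w) s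
        - (2 * s * deriv w s + s - 2 * ((n : ℝ) - 2)) * s * deriv w s
        + 2 * ((n : ℝ) - 2) * (1 - w s) * w s = 0 := by
  intro s hs
  have h3 := deriv_soliton_constraint (hdw s hs).1 (hdw s hs).2 (hdf s hs).2
    (eventually_of_mem (isOpen_Ioi.mem_nhds hs) h2)
  -- `f''` is eliminated between `h1` and `h3`; the remaining `f'` terms via the constraint.
  linear_combination (-(s * w s)) * h1 s hs - (2 * s * w s) * h3
    + (w s + s * deriv w s) * h2 s hs

/-- Substituting `s = a²` and `a'(r) = √(w(a²))` reduces the rotationally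
symmetric shrinking soliton system to the single second-order ODE
`4s²ww'' − [2sw' + s − 2(n−2)] s w' + 2(n−2)(1−w)w = 0` for `w = w(s)`.

Encoding: starting from the system `1 + 2(n−1)w' = 8sw f'' + 4w f' + 4sw' f'` and
`4sw f' = s − 2[(n−2) − sw' − (n−2)w]` (with `'` denoting `d/ds`), eliminating `f`
yields the stated ODE for `w`. -/
theorem stmt12 (n : ℕ) (hn : 2 ≤ n) (S : ℝ) (hS : 0 ≤ S) (w f : ℝ → ℝ)
    (hw : ∀ s ∈ Set.Ioi S, 0 < w s)
    (hdw : ∀ s ∈ Set.Ioi S, DifferentiableAt ℝ w s ∧ DifferentiableAt ℝ (deriv w) s)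
    (hdf : ∀ s ∈ Set.Ioi S, DifferentiableAt ℝ f s ∧ DifferentiableAt ℝ (deriv f) s)
    (h1 : ∀ s ∈ Set.Ioi S,
      1 + 2 * ((n : ℝ) - 1) * deriv w s
        = 8 * s * w s * deriv (deriv f) s + 4 * w s * deriv f s
          + 4 * s * deriv w s * deriv f s)
    (h2 : ∀ s ∈ Set.Ioi S,
      4 * s * w s * deriv f s
        = s - 2 * (((n : ℝ) - 2) - s * deriv w s - ((n : ℝ) - 2) * w s)) :
    ∀ s ∈ Set.Ioi S,
      4 * s ^ 2 * w s * deriv (deriv w) s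
        - (2 * s * deriv w s + s - 2 * ((n : ℝ) - 2)) * s * deriv w s
        + 2 * ((n : ℝ) - 2) * (1 - w s) * w s = 0 :=
  stmt12_general n S w f hdw hdf h1 h2
end

section
/- For G₂ = (τ+a)^{−n/2} exp(−(h−ρ)²/(4(τ+a))) on a shrinker background (with h as in the weight lemma), the conjugate-heat defect satisfies G₂^{−1}(∂_τ G₂ − ∆G₂) + R = −(n−1)ρ/(2h(τ+a)) + a²R/(τ+a)² + (2τρR/(h(τ+a)))·(a/(τ+a) + ρτ/(2h(τ+a)) − τ/h²). -/
/-!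
Since `G₂` is a power of `τ + a` times a Gaussian in `h`, both `∂_τ G₂` and `∆G₂` are `G₂` times
explicit rational expressions in `h`, `∂_τ h`, `∆h` and `|∇h|²`. Dividing by `G₂` and substituting
the three relations satisfied by `h` leaves an identity of rational functions in `h`, `τ`, `a`,
`ρ`, `R` and `n`.
-/

open Real

noncomputable section

/-- The paper's `G₂` is `shiftedHeatKernel (-n/2) a ρ h`. -/
def shiftedHeatKernel (p a ρ : ℝ) (h : ℝ → ℝ) (t : ℝ) : ℝ :=
  (t + a) ^ p * exp (-(h t - ρ) ^ 2 / (4 * (t + a)))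

variable {a ρ τ h' : ℝ} {h : ℝ → ℝ}

theorem hasDerivAt_gaussian_exponent (hh : HasDerivAt h h' τ) (hτa : τ + a ≠ 0) :
    HasDerivAt (fun t => -(h t - ρ) ^ 2 / (4 * (t + a)))
      (-(h τ - ρ) * h' / (2 * (τ + a)) + (h τ - ρ) ^ 2 / (4 * (τ + a) ^ 2)) τ := by
  have hden : HasDerivAt (fun t : ℝ => 4 * (t + a)) 4 τ := by
    simpa using ((hasDerivAt_id τ).add_const a).const_mul 4
  refine (((hh.sub_const ρ).pow 2).neg.div hden (by positivity)).congr_deriv ?_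
  simp only [Pi.neg_apply, Pi.pow_apply]
  field_simp
  ring

theorem hasDerivAt_shiftedHeatKernel (p : ℝ) (hh : HasDerivAt h h' τ) (hτa : 0 < τ + a) :
    HasDerivAt (shiftedHeatKernel p a ρ h)
      (shiftedHeatKernel p a ρ h τ * (p / (τ + a) - (h τ - ρ) * h' / (2 * (τ + a))
        + (h τ - ρ) ^ 2 / (4 * (τ + a) ^ 2))) τ := by
  have hpow : HasDerivAt (fun t : ℝ => (t + a) ^ p) (p * (τ + a) ^ (p - 1)) τ := by
    simpa using ((hasDerivAt_id τ).add_const a).rpow_const (p := p) (Or.inl hτa.ne')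
  refine (hpow.mul (hasDerivAt_gaussian_exponent (ρ := ρ) hh hτa.ne').exp).congr_deriv ?_
  rw [shiftedHeatKernel, rpow_sub_one hτa.ne']
  field_simp
  ring

theorem conjugate_heat_defect_identity (n a ρ τ H R : ℝ) (hH : H ≠ 0) (hτa : τ + a ≠ 0) :
    let gradSq := 1 - 4 * τ ^ 2 * R / H ^ 2
    (-n / 2 / (τ + a) - (H - ρ) * (2 * τ * R / H) / (2 * (τ + a))
        + (H - ρ) ^ 2 / (4 * (τ + a) ^ 2))
      - (-((H - ρ) / (2 * (τ + a))) * ((n - 2 * τ * R - gradSq) / H)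
        + ((H - ρ) ^ 2 / (4 * (τ + a) ^ 2) - 1 / (2 * (τ + a))) * gradSq) + R
      = -(n - 1) * ρ / (2 * H * (τ + a)) + a ^ 2 * R / (τ + a) ^ 2
        + (2 * τ * ρ * R / (H * (τ + a))) *
            (a / (τ + a) + ρ * τ / (2 * H * (τ + a)) - τ / H ^ 2) := by
  intro gradSq
  simp only [gradSq]
  field_simp
  ring

end

theorem stmt18_general (n : ℕ) (a ρ τ₀ : ℝ) (ha : a ∈ Set.Ioo (0:ℝ) 1)
    (h R gradSq lapH LapG : ℝ → ℝ)
    (hpos : ∀ τ ∈ Set.Ioc 0 τ₀, 0 < h τ)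
    (hdh : ∀ τ ∈ Set.Ioc 0 τ₀, HasDerivAt h (2 * τ * R τ / h τ) τ)
    (hgs : ∀ τ ∈ Set.Ioc 0 τ₀, gradSq τ = 1 - 4 * τ ^ 2 * R τ / (h τ) ^ 2)
    (hlap : ∀ τ ∈ Set.Ioc 0 τ₀, h τ * lapH τ = n - 2 * τ * R τ - gradSq τ)
    (hchain : ∀ τ ∈ Set.Ioc 0 τ₀,
      LapG τ = ((τ + a) ^ (-(n:ℝ) / 2) * Real.exp (-(h τ - ρ) ^ 2 / (4 * (τ + a)))) *
        (-((h τ - ρ) / (2 * (τ + a))) * lapH τ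
          + ((h τ - ρ) ^ 2 / (4 * (τ + a) ^ 2) - 1 / (2 * (τ + a))) * gradSq τ)) :
    ∀ τ ∈ Set.Ioc 0 τ₀,
      ((τ + a) ^ (-(n:ℝ) / 2) * Real.exp (-(h τ - ρ) ^ 2 / (4 * (τ + a))))⁻¹ *
          (deriv (fun t => (t + a) ^ (-(n:ℝ) / 2)
              * Real.exp (-(h t - ρ) ^ 2 / (4 * (t + a)))) τ
            - LapG τ) + R τ
        = -((n:ℝ) - 1) * ρ / (2 * h τ * (τ + a)) + a ^ 2 * R τ / (τ + a) ^ 2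
          + (2 * τ * ρ * R τ / (h τ * (τ + a))) *
              (a / (τ + a) + ρ * τ / (2 * h τ * (τ + a)) - τ / (h τ) ^ 2) := by
  intro τ hτ
  have hτa : 0 < τ + a := by linarith [hτ.1, ha.1]
  have hh : h τ ≠ 0 := (hpos τ hτ).ne'
  have hG : shiftedHeatKernel (-(n:ℝ) / 2) a ρ h τ ≠ 0 :=
    mul_ne_zero (rpow_pos_of_pos hτa _).ne' (exp_ne_zero _)
  have hlapH : lapH τ = (n - 2 * τ * R τ - gradSq τ) / h τ := by
    rw [eq_div_iff hh, mul_comm, hlap τ hτ]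
  have hderiv : deriv (shiftedHeatKernel (-(n:ℝ) / 2) a ρ h) τ = _ :=
    (hasDerivAt_shiftedHeatKernel _ (hdh τ hτ) hτa).deriv
  change (shiftedHeatKernel _ a ρ h τ)⁻¹ * (deriv (shiftedHeatKernel _ a ρ h) τ - LapG τ) + R τ = _
  rw [hderiv, hchain τ hτ, ← shiftedHeatKernel, ← mul_sub, inv_mul_cancel_left₀ hG, hlapH, hgs τ hτ]
  exact conjugate_heat_defect_identity n a ρ τ (h τ) (R τ) hh hτa.ne'

/-- For `G₂ = (τ+a)^{−n/2} exp(−(h−ρ)²/(4(τ+a)))` on a shrinker background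
(with `h` as in the weight lemma: `∂_τh = 2τR/h`, `|∇h|² = 1 − 4τ²R/h²`,
`h∆h = n − 2τR − |∇h|²`), the conjugate-heat defect satisfies
`G₂⁻¹(∂_τG₂ − ∆G₂) + R = −(n−1)ρ/(2h(τ+a)) + a²R/(τ+a)²
  + (2τρR/(h(τ+a)))·(a/(τ+a) + ρτ/(2h(τ+a)) − τ/h²)`.

Encoding: quantities along the time axis at a fixed point; `gradSq = |∇h|²`,
`lapH = ∆h`, and `LapG = ∆G₂` given by the (metric-independent) chain rule
`∆G₂ = (∂_hG₂)∆h + (∂²_hG₂)|∇h|²`. -/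
theorem stmt18 (n : ℕ) (a ρ τ₀ : ℝ) (ha : a ∈ Set.Ioo (0:ℝ) 1) (hρ : 0 < ρ)
    (hτ₀ : 0 < τ₀)
    (h R gradSq lapH LapG : ℝ → ℝ)
    (hpos : ∀ τ ∈ Set.Ioc 0 τ₀, 0 < h τ)
    (hdh : ∀ τ ∈ Set.Ioc 0 τ₀, HasDerivAt h (2 * τ * R τ / h τ) τ)
    (hgs : ∀ τ ∈ Set.Ioc 0 τ₀, gradSq τ = 1 - 4 * τ ^ 2 * R τ / (h τ) ^ 2)
    (hlap : ∀ τ ∈ Set.Ioc 0 τ₀, h τ * lapH τ = n - 2 * τ * R τ - gradSq τ)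
    (hchain : ∀ τ ∈ Set.Ioc 0 τ₀,
      LapG τ = ((τ + a) ^ (-(n:ℝ) / 2) * Real.exp (-(h τ - ρ) ^ 2 / (4 * (τ + a)))) *
        (-((h τ - ρ) / (2 * (τ + a))) * lapH τ
          + ((h τ - ρ) ^ 2 / (4 * (τ + a) ^ 2) - 1 / (2 * (τ + a))) * gradSq τ)) :
    ∀ τ ∈ Set.Ioc 0 τ₀,
      ((τ + a) ^ (-(n:ℝ) / 2) * Real.exp (-(h τ - ρ) ^ 2 / (4 * (τ + a))))⁻¹ *
          (deriv (fun t => (t + a) ^ (-(n:ℝ) / 2)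
              * Real.exp (-(h t - ρ) ^ 2 / (4 * (t + a)))) τ
            - LapG τ) + R τ
        = -((n:ℝ) - 1) * ρ / (2 * h τ * (τ + a)) + a ^ 2 * R τ / (τ + a) ^ 2
          + (2 * τ * ρ * R τ / (h τ * (τ + a))) *
              (a / (τ + a) + ρ * τ / (2 * h τ * (τ + a)) - τ / (h τ) ^ 2) :=
  stmt18_general n a ρ τ₀ ha h R gradSq lapH LapG hpos hdh hgs hlap hchain
end
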